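/- arXiv:2504.14647 — 2 statements merged into one kernel-verified Lean document; each statement's English description precedes it below -/
import Mathlib

section
/- The skew-symmetric bilinear map φ_2 on h_2 defined by φ_2(e_1,e_3) = e_1, φ_2(e_1,e_4) = −e_2, φ_2(e_2,e_3) = 2e_2, φ_2(e_3,e_4) = −e_4, φ_2(e_3,e_5) = −3e_5, and zero otherwise, is a 2-cocycle of h_2 with adjoint coefficients, and the deformed bracket [x,y]_t = [x,y] + t φ_2(x,y) satisfies the Jacobi identity for every scalar t. -/
noncomputable section

/-- The underlying space of the 5-dimensional Heisenberg Lie algebra `h₂`. -/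
abbrev V : Type := Fin 5 → ℝ

/-- Basis vectors: `e 0, …, e 4` are `e₁, …, e₅`. -/
def e (i : Fin 5) : V := Pi.single i 1

/-- The Heisenberg bracket on `h₂`: `[e₁,e₃] = e₅`, `[e₂,e₄] = e₅`. -/
def br (x y : V) : V :=
  (x 0 * y 2 - x 2 * y 0 + x 1 * y 3 - x 3 * y 1) • e 4

/-- The deformed bracket `[x,y]_t = [x,y] + t • φ x y`. -/
def brt (t : ℝ) (φ : V → V → V) (x y : V) : V := br x y + t • φ x y

/-- The Chevalley–Eilenberg 2-cocycle condition (adjoint coefficients) for a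
skew-symmetric 2-cochain `φ` on `h₂`. -/
def IsCocycle (φ : V → V → V) : Prop :=
  ∀ x y z : V,
    φ (br x y) z - φ (br x z) y + φ (br y z) x
      - br x (φ y z) + br y (φ x z) - br z (φ x y) = 0

/-- `φ₂(e₁,e₃) = e₁`, `φ₂(e₁,e₄) = −e₂`, `φ₂(e₂,e₃) = 2e₂`, `φ₂(e₃,e₄) = −e₄`, `φ₂(e₃,e₅) = −3e₅`, zero otherwise. -/
def phi2 (x y : V) : V :=
  (x 0 * y 2 - x 2 * y 0) • e 0
  + (x 0 * y 3 - x 3 * y 0) • (-e 1)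
  + (x 1 * y 2 - x 2 * y 1) • ((2:ℝ) • e 1)
  + (x 2 * y 3 - x 3 * y 2) • (-e 3)
  + (x 2 * y 4 - x 4 * y 2) • ((-3:ℝ) • e 4)

/-!
Expanding in `t`, `[x,[y,z]_t]_t = [x,[y,z]] + t ([x,φ(y,z)] + φ(x,[y,z])) + t² φ(x,φ(y,z))`.
In the cyclic sum the constant term is `0` because `h₂` is two-step nilpotent, the linear term is
minus the Chevalley–Eilenberg coboundary of the skew-symmetric `φ`, and the quadratic term is the
Jacobiator of `φ`. So the deformed bracket is a Lie bracket for all `t` as soon as `φ` is a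
2-cocycle which is itself a Lie bracket; for `φ₂` both are coordinate computations.
-/

lemma isLinearMap_br (x : V) : IsLinearMap ℝ (br x) where
  map_add y z := by simp only [br, Pi.add_apply]; module
  map_smul c y := by simp only [br, Pi.smul_apply, smul_eq_mul]; module

lemma br_swap (x y : V) : br y x = -br x y := by
  simp only [br]; module

lemma br_br (x y z : V) : br x (br y z) = 0 := by
  simp [br, e]

lemma isLinearMap_phi2 (x : V) : IsLinearMap ℝ (phi2 x) where
  map_add y z := by simp only [phi2, Pi.add_apply]; module
  map_smul c y := by simp only [phi2, Pi.smul_apply, smul_eq_mul]; module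

lemma phi2_swap (x y : V) : phi2 y x = -phi2 x y := by
  simp only [phi2]; module

lemma isCocycle_phi2 : IsCocycle phi2 := by
  intro x y z
  simp only [phi2, br, e, Pi.add_apply, Pi.smul_apply, Pi.neg_apply, smul_eq_mul,
    Pi.single_eq_same, Pi.single_eq_of_ne, ne_eq, Fin.reduceEq, not_false_eq_true]
  module

lemma phi2_jacobi (x y z : V) :
    phi2 x (phi2 y z) + phi2 y (phi2 z x) + phi2 z (phi2 x y) = 0 := by
  simp only [phi2, e, Pi.add_apply, Pi.smul_apply, Pi.neg_apply, smul_eq_mul,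
    Pi.single_eq_same, Pi.single_eq_of_ne, ne_eq, Fin.reduceEq, not_false_eq_true]
  module

lemma brt_brt (t : ℝ) {φ : V → V → V} (hφ : ∀ x, IsLinearMap ℝ (φ x)) (x y z : V) :
    brt t φ x (brt t φ y z) = t • (br x (φ y z) + φ x (br y z)) + t ^ 2 • φ x (φ y z) := by
  simp only [brt, (isLinearMap_br x).map_add, (isLinearMap_br x).map_smul, (hφ x).map_add,
    (hφ x).map_smul, br_br]
  module

theorem brt_jacobi {φ : V → V → V} (hlin : ∀ x, IsLinearMap ℝ (φ x))
    (hskew : ∀ x y, φ y x = -φ x y) (hφ : IsCocycle φ)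
    (hjac : ∀ x y z, φ x (φ y z) + φ y (φ z x) + φ z (φ x y) = 0) (t : ℝ) (x y z : V) :
    brt t φ x (brt t φ y z) + brt t φ y (brt t φ z x) + brt t φ z (brt t φ x y) = 0 := by
  have hcoeff_t : br x (φ y z) + φ x (br y z) + (br y (φ z x) + φ y (br z x))
      + (br z (φ x y) + φ z (br x y)) = 0 := by
    rw [hskew x z, (isLinearMap_br y).map_neg, br_swap x z, (hlin y).map_neg, hskew (br x z) y,
      hskew (br y z) x, hskew (br x y) z]
    linear_combination (norm := module) -hφ x y z
  simp only [brt_brt t hlin]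
  linear_combination (norm := module) t • hcoeff_t + t ^ 2 • hjac x y z

/-- `φ₂` is a 2-cocycle, and `[x,y]_t = [x,y] + t φ₂(x,y)` satisfies the Jacobi
identity for every scalar `t`. -/
theorem phi2_cocycle_and_jacobi :
    IsCocycle phi2 ∧
      ∀ (t : ℝ) (x y z : V),
        brt t phi2 x (brt t phi2 y z) + brt t phi2 y (brt t phi2 z x)
          + brt t phi2 z (brt t phi2 x y) = 0 :=
  ⟨isCocycle_phi2, brt_jacobi isLinearMap_phi2 phi2_swap isCocycle_phi2 phi2_jacobi⟩

end
end

section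
/- For q ≠ 0, the infinitesimal deformation of h_2 given by the cocycle φ_8(0,q,0) (i.e., φ(e_2,e_3) = e_1 + q e_2, φ(e_1,e_4) = −q e_5, φ(e_2,e_4) = −q^2·e_2 taken from the formula with p = 0, r = 0) is not extendable to a second-order deformation with the same cochain: the bracket [x,y]_t = [x,y] + t φ(x,y) fails the Jacobi identity, with a nonzero t^2-term appearing. -/
/-!
On `e₂, e₃, e₄` the cyclic sum `Σ φ(x, φ(y, z))` equals `-q² e₁ + q e₅`. Its `e₁`-coordinate
survives in the Jacobiator of `[·,·]_t` unchanged up to the factor `t²`: the bracket of `h₂`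
takes values in `ℝ e₅`, and `φ` neither has an `e₁`-component on `e₅` nor reads `e₅`.
-/
noncomputable section

/-- The cochain `φ₈(0,q,0)` of Statement 17: `(e₂,e₃) ↦ e₁ + q e₂`, `(e₁,e₄) ↦ −q e₅`, `(e₂,e₄) ↦ −q² e₂`, zero otherwise. -/
def phi17 (q : ℝ) (x y : V) : V :=
  (x 1 * y 2 - x 2 * y 1) • (e 0 + q • e 1)
  + (x 0 * y 3 - x 3 * y 0) • ((-q) • e 4)
  + (x 1 * y 3 - x 3 * y 1) • ((-(q^2)) • e 1)

def jacobiator {M : Type*} [Add M] (b : M → M → M) (x y z : M) : M :=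
  b x (b y z) + b y (b z x) + b z (b x y)

theorem jacobiator_phi17_e₂_e₃_e₄ (q : ℝ) :
    jacobiator (phi17 q) (e 1) (e 2) (e 3) = (-q ^ 2) • e 0 + q • e 4 := by
  funext i
  fin_cases i <;> simp [jacobiator, phi17, e]; ring

theorem jacobiator_brt_phi17_apply_zero (t q : ℝ) (x y z : V) :
    jacobiator (brt t (phi17 q)) x y z 0 = t ^ 2 * jacobiator (phi17 q) x y z 0 := by
  simp [jacobiator, brt, br, phi17, e]
  ring

/-- For `q ≠ 0` the infinitesimal deformation given by `φ₈(0,q,0)` is not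
extendable: the bracket `[x,y]_t = [x,y] + t φ(x,y)` fails the Jacobi identity
for some `t ≠ 0`, a nonzero `t²`-term appearing (the quadratic coefficient
`Σ_cyc φ(x, φ(y,z))` does not vanish identically). -/
theorem phi17_not_extendable (q : ℝ) (hq : q ≠ 0) :
    (∃ (t : ℝ), t ≠ 0 ∧ ∃ x y z : V,
        brt t (phi17 q) x (brt t (phi17 q) y z)
          + brt t (phi17 q) y (brt t (phi17 q) z x)
          + brt t (phi17 q) z (brt t (phi17 q) x y) ≠ 0) ∧
      ∃ x y z : V,
        phi17 q x (phi17 q y z) + phi17 q y (phi17 q z x)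
          + phi17 q z (phi17 q x y) ≠ 0 := by
  have hJ : jacobiator (phi17 q) (e 1) (e 2) (e 3) 0 ≠ 0 := by
    rw [jacobiator_phi17_e₂_e₃_e₄]
    simp [e, hq]
  refine ⟨⟨1, one_ne_zero, e 1, e 2, e 3, fun h => hJ ?_⟩,
    e 1, e 2, e 3, fun h => hJ (congrFun h 0)⟩
  simpa using (jacobiator_brt_phi17_apply_zero 1 q (e 1) (e 2) (e 3)).symm.trans (congrFun h 0)

end
end
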